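/- arXiv:1106.2693 — 6 statements merged into one kernel-verified Lean document; each statement's English description precedes it below -/
import Mathlib

section
/- Let a, b, c, d, e be real numbers such that both triples (a, b, e) and (c, d, e) satisfy the tropical triangle inequalities (i.e., in each triple the maximum is achieved at least twice). Then 2e + max(a+b, c+d) ≤ max(a+c, b+d) + max(a+d, b+c). -/
set_option maxHeartbeats 2000000 in
theorem tt_implies_tf (a b c d e : ℝ)
    (h1 : a ≤ max b e) (h2 : b ≤ max a e) (h3 : e ≤ max a b)
    (h4 : c ≤ max d e) (h5 : d ≤ max c e) (h6 : e ≤ max c d) :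
    2 * e + max (a + b) (c + d) ≤ max (a + c) (b + d) + max (a + d) (b + c) := by
  have g1 : a + c ≤ max (a + c) (b + d) := le_max_left _ _
  have g2 : b + d ≤ max (a + c) (b + d) := le_max_right _ _
  have g3 : a + d ≤ max (a + d) (b + c) := le_max_left _ _
  have g4 : b + c ≤ max (a + d) (b + c) := le_max_right _ _
  simp only [le_max_iff] at h1 h2 h3 h4 h5 h6
  rcases le_total (a + b) (c + d) with hm|hm
  · rw [max_eq_right hm]
    rcases h1 with h1|h1 <;> rcases h2 with h2|h2 <;> rcases h3 with h3|h3 <;>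
      rcases h4 with h4|h4 <;> rcases h5 with h5|h5 <;> rcases h6 with h6|h6 <;> linarith
  · rw [max_eq_left hm]
    rcases h1 with h1|h1 <;> rcases h2 with h2|h2 <;> rcases h3 with h3|h3 <;>
      rcases h4 with h4|h4 <;> rcases h5 with h5|h5 <;> rcases h6 with h6|h6 <;> linarith
end

section
/- Let a, b, c, d, e be positive real numbers such that both triples (a, b, e) and (c, d, e) satisfy the tropical triangle inequalities. Then the classical face condition holds: cd(a² + b² − e²) + ab(c² + d² − e²) ≥ 0. -/
theorem tt_implies_cf (a b c d e : ℝ)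
    (ha : 0 < a) (hb : 0 < b) (hc : 0 < c) (hd : 0 < d) (he : 0 < e)
    (h1 : a ≤ max b e) (h2 : b ≤ max a e) (h3 : e ≤ max a b)
    (h4 : c ≤ max d e) (h5 : d ≤ max c e) (h6 : e ≤ max c d) :
    c * d * (a ^ 2 + b ^ 2 - e ^ 2) + a * b * (c ^ 2 + d ^ 2 - e ^ 2) ≥ 0 := by
  have hab : a ^ 2 + b ^ 2 - e ^ 2 ≥ 0 := by
    rcases le_total a b with h | h
    · rw [max_eq_right h] at h3; nlinarith
    · rw [max_eq_left h] at h3; nlinarith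
  have hcd : c ^ 2 + d ^ 2 - e ^ 2 ≥ 0 := by
    rcases le_total c d with h | h
    · rw [max_eq_right h] at h6; nlinarith
    · rw [max_eq_left h] at h6; nlinarith
  have := mul_pos hc hd
  have := mul_pos ha hb
  nlinarith
end

section
/- Let a, b, c, d, e be positive real numbers with c + d ≤ e satisfying the classical face condition cd(a²+b²−e²) + ab(c²+d²−e²) ≥ 0. Then (a−b)² ≥ e², so in particular e ≤ |a − b|, i.e., either a ≥ b + e or b ≥ a + e. -/
theorem cf_degenerate (a b c d e : ℝ)
    (ha : 0 < a) (hb : 0 < b) (hc : 0 < c) (hd : 0 < d) (he : 0 < e)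
    (hcd : c + d ≤ e)
    (hcf : c * d * (a ^ 2 + b ^ 2 - e ^ 2) + a * b * (c ^ 2 + d ^ 2 - e ^ 2) ≥ 0) :
    (a - b) ^ 2 ≥ e ^ 2 ∧ (a ≥ b + e ∨ b ≥ a + e) := by
  have key : (a - b) ^ 2 ≥ e ^ 2 := by
    nlinarith [mul_pos hc hd, mul_pos ha hb, sq_nonneg (c + d),
      mul_nonneg (mul_pos ha hb).le (sub_nonneg.2 hcd),
      mul_pos (mul_pos ha hb) (add_pos (add_pos hc hd) he)]
  refine ⟨key, ?_⟩
  rcases le_total a b with h | h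
  · right; nlinarith [abs_le_abs (le_refl e)]
  · left; nlinarith
end

section
/- Let a, b, c, d, e, f be real numbers satisfying the tropical Ptolemy relation e + f = max(a+c, b+d), and suppose both tropical face conditions hold: 2e + max(a+b, c+d) ≤ max(a+c, b+d) + max(a+d, b+c) and 2f + max(a+d, b+c) ≤ max(a+c, b+d) + max(a+b, c+d). Then e = (max(a+c, b+d) + max(a+d, b+c) − max(a+b, c+d))/2 and f = (max(a+c, b+d) + max(a+b, c+d) − max(a+d, b+c))/2. -/
theorem balanced_quad (a b c d e f : ℝ)
    (hpt : e + f = max (a + c) (b + d))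
    (h1 : 2 * e + max (a + b) (c + d) ≤ max (a + c) (b + d) + max (a + d) (b + c))
    (h2 : 2 * f + max (a + d) (b + c) ≤ max (a + c) (b + d) + max (a + b) (c + d)) :
    e = (max (a + c) (b + d) + max (a + d) (b + c) - max (a + b) (c + d)) / 2 ∧
    f = (max (a + c) (b + d) + max (a + b) (c + d) - max (a + d) (b + c)) / 2 := by
  constructor <;> linarith
end

section
/- Let a, b, c, d be real numbers such that the maximum of {a, b, c, d} is achieved at least twice, and define e = (max(a+c, b+d) + max(a+d, b+c) − max(a+b, c+d))/2. Then: if a = b = max, then e = max(c,d); if the max is achieved by a together with c or d, then e = a; if the max is achieved by b together with c or d, then e = b; and if c = d = max, then e = max(a,b). -/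
theorem balanced_cases (a b c d : ℝ)
    (m : ℝ) (hm : m = max (max a b) (max c d))
    (htwice : (a = m ∧ b = m) ∨ (a = m ∧ c = m) ∨ (a = m ∧ d = m) ∨
      (b = m ∧ c = m) ∨ (b = m ∧ d = m) ∨ (c = m ∧ d = m))
    (e : ℝ)
    (he : e = (max (a + c) (b + d) + max (a + d) (b + c) - max (a + b) (c + d)) / 2) :
    (a = m ∧ b = m → e = max c d) ∧
    (a = m ∧ (c = m ∨ d = m) → e = a) ∧
    (b = m ∧ (c = m ∨ d = m) → e = b) ∧
    (c = m ∧ d = m → e = max a b) := by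
  subst he
  have ha : a ≤ m := hm ▸ le_max_of_le_left (le_max_left a b)
  have hb : b ≤ m := hm ▸ le_max_of_le_left (le_max_right a b)
  have hc : c ≤ m := hm ▸ le_max_of_le_right (le_max_left c d)
  have hd : d ≤ m := hm ▸ le_max_of_le_right (le_max_right c d)
  refine ⟨?_, ?_, ?_, ?_⟩ <;>
    rintro ⟨h1, h2 | h2⟩ <;>
    simp only [max_def] <;> split_ifs <;> linarith
end

section
/- Let a, b, c, d be real numbers such that both triples (a, b, e) and (c, d, e) satisfy the tropical triangle inequalities, where e = (max(a+c, b+d) + max(a+d, b+c) − max(a+b, c+d))/2. Then the maximum of {a, b, c, d} is achieved at least twice. -/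
theorem tt_implies_tgt (a b c d : ℝ)
    (e : ℝ)
    (he : e = (max (a + c) (b + d) + max (a + d) (b + c) - max (a + b) (c + d)) / 2)
    (h1 : a ≤ max b e) (h2 : b ≤ max a e) (h3 : e ≤ max a b)
    (h4 : c ≤ max d e) (h5 : d ≤ max c e) (h6 : e ≤ max c d) :
    let m := max (max a b) (max c d)
    (a = m ∧ b = m) ∨ (a = m ∧ c = m) ∨ (a = m ∧ d = m) ∨
      (b = m ∧ c = m) ∨ (b = m ∧ d = m) ∨ (c = m ∧ d = m) := by
  intro m
  have hm : m = max (max a b) (max c d) := rfl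
  have ham : a ≤ m := by simp [hm, le_max_iff]
  have hbm : b ≤ m := by simp [hm, le_max_iff]
  have hcm : c ≤ m := by simp [hm, le_max_iff]
  have hdm : d ≤ m := by simp [hm, le_max_iff]
  have hattain : m = a ∨ m = b ∨ m = c ∨ m = d := by
    rcases max_cases (max a b) (max c d) with ⟨h'', _⟩ | ⟨h'', _⟩
    · rcases max_cases a b with ⟨h, _⟩ | ⟨h, _⟩ <;> rw [hm, h'', h] <;> tauto
    · rcases max_cases c d with ⟨h, _⟩ | ⟨h, _⟩ <;> rw [hm, h'', h] <;> tauto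
  rcases hattain with h | h | h | h
  · rcases le_max_iff.mp h1 with h1' | h1'
    · exact Or.inl ⟨h.symm, le_antisymm hbm (by linarith)⟩
    · rcases le_max_iff.mp h6 with h6' | h6'
      · exact Or.inr (Or.inl ⟨h.symm, le_antisymm hcm (by linarith)⟩)
      · exact Or.inr (Or.inr (Or.inl ⟨h.symm, le_antisymm hdm (by linarith)⟩))
  · rcases le_max_iff.mp h2 with h2' | h2'
    · exact Or.inl ⟨le_antisymm ham (by linarith), h.symm⟩
    · rcases le_max_iff.mp h6 with h6' | h6'
      · exact Or.inr (Or.inr (Or.inr (Or.inl ⟨h.symm, le_antisymm hcm (by linarith)⟩)))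
      · exact Or.inr (Or.inr (Or.inr (Or.inr (Or.inl ⟨h.symm, le_antisymm hdm (by linarith)⟩))))
  · rcases le_max_iff.mp h4 with h4' | h4'
    · exact Or.inr (Or.inr (Or.inr (Or.inr (Or.inr ⟨h.symm, le_antisymm hdm (by linarith)⟩))))
    · rcases le_max_iff.mp h3 with h3' | h3'
      · exact Or.inr (Or.inl ⟨le_antisymm ham (by linarith), h.symm⟩)
      · exact Or.inr (Or.inr (Or.inr (Or.inl ⟨le_antisymm hbm (by linarith), h.symm⟩)))
  · rcases le_max_iff.mp h5 with h5' | h5'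
    · exact Or.inr (Or.inr (Or.inr (Or.inr (Or.inr ⟨le_antisymm hcm (by linarith), h.symm⟩))))
    · rcases le_max_iff.mp h3 with h3' | h3'
      · exact Or.inr (Or.inr (Or.inl ⟨le_antisymm ham (by linarith), h.symm⟩))
      · exact Or.inr (Or.inr (Or.inr (Or.inr (Or.inl ⟨le_antisymm hbm (by linarith), h.symm⟩))))
end
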